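/- arXiv:0806.3592 — 2 statements merged into one kernel-verified Lean document; each statement's English description precedes it below -/
import Mathlib

section
/- For all Schwartz functions u: R^2 → R, one has the Ladyzhenskaya inequality ‖u‖_{L^4(R^2)} ≲ ‖u‖_{L^2(R^2)}^{1/2} ‖∂_x u‖_{L^2(R^2)}^{1/2}. -/
/-!
The Gagliardo–Nirenberg–Sobolev inequality on the plane, `‖w‖_{L²} ≲ ‖Dw‖_{L¹}` for compactly
supported `C¹` functions, applied to `w = v²` gives the estimate: `‖v²‖_{L²} = ‖v‖_{L⁴}²` and
`D(v²) = 2v Dv`, so Hölder yields `‖v‖_{L⁴}² ≲ ‖v‖_{L²} ‖Dv‖_{L²}`. A general `u` is approximated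
by `χ(x/n) u` for a bump `χ`: these have `L²` norm at most `‖u‖_{L²}`, their derivatives differ
from `Du` by `O(1/n) |u|`, and Fatou's lemma carries the bound to the limit.
-/

open MeasureTheory Filter Topology Module
open scoped ENNReal NNReal

section MulSelf

variable {α : Type*} [MeasurableSpace α] {μ : Measure α}

theorem eLpNorm_mul_self_two (v : α → ℝ) :
    eLpNorm (fun x => v x * v x) 2 μ = eLpNorm v 4 μ ^ (2 : ℝ) := by
  have hv : (fun x => v x * v x) = fun x => ‖v x‖ ^ (2 : ℝ) := by
    ext x
    rw [Real.rpow_two, Real.norm_eq_abs, sq_abs, sq]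
  rw [hv, eLpNorm_norm_rpow v two_pos]
  norm_num

variable {E : Type*} [NormedAddCommGroup E] [NormedSpace ℝ E]

theorem fderiv_mul_self {v : E → ℝ} (hv : Differentiable ℝ v) :
    fderiv ℝ (fun x => v x * v x) = fun x => (2 * v x) • fderiv ℝ v x := by
  ext1 x
  rw [fderiv_fun_mul (hv x) (hv x), ← add_smul, two_mul]

variable [FiniteDimensional ℝ E] [MeasurableSpace E] [BorelSpace E] {μ : Measure E}

theorem eLpNorm_fderiv_mul_self_le {v : E → ℝ} (hv : ContDiff ℝ 1 v) :
    eLpNorm (fderiv ℝ (fun x => v x * v x)) 1 μ ≤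
      2 * eLpNorm v 2 μ * eLpNorm (fderiv ℝ v) 2 μ := by
  rw [fderiv_mul_self (hv.differentiable one_ne_zero)]
  refine (eLpNorm_smul_le_mul_eLpNorm (p := 2) (q := 2) (r := 1) (φ := fun x => 2 * v x)
    (hpqr := ⟨by rw [inv_one, ← one_div, ENNReal.add_halves]⟩)
    (hv.continuous_fderiv one_ne_zero).aestronglyMeasurable
    (continuous_const.mul hv.continuous).aestronglyMeasurable).trans_eq ?_
  rw [show (fun x => 2 * v x) = (2 : ℝ) • v from rfl, eLpNorm_const_smul,
    show ‖(2 : ℝ)‖ₑ = 2 by exact_mod_cast Real.enorm_natCast 2]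

end MulSelf

section CompactSupport

variable {E : Type*} [NormedAddCommGroup E] [NormedSpace ℝ E] [MeasurableSpace E] [BorelSpace E]
  [FiniteDimensional ℝ E] (μ : Measure E) [μ.IsAddHaarMeasure]

noncomputable def ladyzhenskayaConst : ℝ≥0 :=
  (2 * eLpNormLESNormFDerivOneConst μ 2) ^ ((1 : ℝ) / 2)

theorem eLpNorm_four_le_of_hasCompactSupport (hE : finrank ℝ E = 2) {v : E → ℝ}
    (hv : ContDiff ℝ 1 v) (h2v : HasCompactSupport v) :
    eLpNorm v 4 μ ≤ ladyzhenskayaConst μ * eLpNorm v 2 μ ^ ((1 : ℝ) / 2) *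
      eLpNorm (fderiv ℝ v) 2 μ ^ ((1 : ℝ) / 2) := by
  set K := eLpNormLESNormFDerivOneConst μ 2
  have hconj : NNReal.HolderConjugate (finrank ℝ E) 2 := by
    rw [hE, Nat.cast_ofNat]
    exact NNReal.HolderConjugate.two_two
  have hsq : eLpNorm v 4 μ ^ (2 : ℝ) ≤
      ((2 * K : ℝ≥0) : ℝ≥0∞) * (eLpNorm v 2 μ * eLpNorm (fderiv ℝ v) 2 μ) :=
    calc eLpNorm v 4 μ ^ (2 : ℝ) = eLpNorm (fun x => v x * v x) 2 μ :=
          (eLpNorm_mul_self_two v).symm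
      _ ≤ K * eLpNorm (fderiv ℝ (fun x => v x * v x)) 1 μ := by
          exact_mod_cast eLpNorm_le_eLpNorm_fderiv_one μ (hv.mul hv) h2v.mul_left hconj
      _ ≤ K * (2 * eLpNorm v 2 μ * eLpNorm (fderiv ℝ v) 2 μ) := by
          gcongr
          exact eLpNorm_fderiv_mul_self_le hv
      _ = ((2 * K : ℝ≥0) : ℝ≥0∞) * (eLpNorm v 2 μ * eLpNorm (fderiv ℝ v) 2 μ) := by
          push_cast
          ring
  calc eLpNorm v 4 μ = (eLpNorm v 4 μ ^ (2 : ℝ)) ^ ((1 : ℝ) / 2) := by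
        rw [← ENNReal.rpow_mul]
        norm_num
    _ ≤ (((2 * K : ℝ≥0) : ℝ≥0∞) * (eLpNorm v 2 μ * eLpNorm (fderiv ℝ v) 2 μ)) ^ ((1 : ℝ) / 2) :=
        ENNReal.rpow_le_rpow hsq (by norm_num)
    _ = _ := by
        rw [ENNReal.mul_rpow_of_nonneg _ _ (by norm_num),
          ENNReal.mul_rpow_of_nonneg _ _ (by norm_num), ← ENNReal.coe_rpow_of_nonneg _ (by norm_num), ← mul_assoc, ladyzhenskayaConst]

end CompactSupport

section Cutoff

variable {E : Type*} [NormedAddCommGroup E] [NormedSpace ℝ E] [FiniteDimensional ℝ E]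

variable (E) in
noncomputable def unitBump : ContDiffBump (0 : E) := ⟨1, 2, one_pos, one_lt_two⟩

noncomputable def cutoff (n : ℕ) (x : E) : ℝ := unitBump E ((n : ℝ)⁻¹ • x)

theorem contDiff_cutoff (n : ℕ) {k : ℕ∞} : ContDiff ℝ k (cutoff (E := E) n) :=
  (unitBump E).contDiff.comp (contDiff_id.const_smul _)

theorem cutoff_nonneg (n : ℕ) (x : E) : 0 ≤ cutoff n x := (unitBump E).nonneg

theorem cutoff_le_one (n : ℕ) (x : E) : cutoff n x ≤ 1 := (unitBump E).le_one

theorem hasCompactSupport_cutoff {n : ℕ} (hn : n ≠ 0) : HasCompactSupport (cutoff (E := E) n) :=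
  (unitBump E).hasCompactSupport.comp_smul (by simpa using hn)

theorem cutoff_eq_one {n : ℕ} {x : E} (hx : ‖x‖ ≤ n) : cutoff n x = 1 := by
  apply (unitBump E).one_of_mem_closedBall
  rw [mem_closedBall_zero_iff, norm_smul, norm_inv, Real.norm_natCast]
  exact inv_mul_le_one_of_le₀ hx (Nat.cast_nonneg n)

theorem fderiv_cutoff (n : ℕ) (x : E) :
    fderiv ℝ (cutoff n) x = (n : ℝ)⁻¹ • fderiv ℝ (unitBump E) ((n : ℝ)⁻¹ • x) := by
  have hφ : DifferentiableAt ℝ (unitBump E) ((n : ℝ)⁻¹ • x) :=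
    ((unitBump E).contDiff (n := 1)).differentiable one_ne_zero _
  have hcomp := hφ.hasFDerivAt.comp x ((hasFDerivAt_id x).const_smul (n : ℝ)⁻¹)
  rw [show cutoff n = unitBump E ∘ HSMul.hSMul (n : ℝ)⁻¹ from rfl, hcomp.fderiv]
  ext y
  simp

theorem exists_norm_fderiv_cutoff_le :
    ∃ M : ℝ≥0, ∀ (n : ℕ) (x : E), ‖fderiv ℝ (cutoff n) x‖ ≤ M / n := by
  obtain ⟨M, hM⟩ := ((unitBump E).hasCompactSupport.fderiv (𝕜 := ℝ)).exists_bound_of_continuous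
    ((unitBump E).contDiff.continuous_fderiv one_ne_zero)
  refine ⟨M.toNNReal, fun n x => ?_⟩
  rw [fderiv_cutoff, norm_smul, norm_inv, Real.norm_natCast, div_eq_inv_mul]
  gcongr
  exact (hM _).trans (Real.le_coe_toNNReal M)

theorem tendsto_cutoff_mul (u : E → ℝ) (x : E) :
    Tendsto (fun n => cutoff n x * u x) atTop (𝓝 (u x)) := by
  apply tendsto_atTop_of_eventually_const (i₀ := ⌈‖x‖⌉₊)
  intro n hn
  rw [cutoff_eq_one ((Nat.le_ceil _).trans (by exact_mod_cast hn)), one_mul]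

variable [MeasurableSpace E] {μ : Measure E}

theorem eLpNorm_cutoff_mul_le (n : ℕ) (u : E → ℝ) (p : ℝ≥0∞) :
    eLpNorm (fun x => cutoff n x * u x) p μ ≤ eLpNorm u p μ := by
  refine eLpNorm_mono fun x => ?_
  rw [norm_mul, Real.norm_of_nonneg (cutoff_nonneg n x)]
  exact mul_le_of_le_one_left (norm_nonneg _) (cutoff_le_one n x)

theorem eLpNorm_fderiv_cutoff_mul_le [BorelSpace E] {n : ℕ} {u : E → ℝ} (hu : ContDiff ℝ 1 u)
    {c : ℝ≥0} (hc : ∀ x : E, ‖fderiv ℝ (cutoff n) x‖ ≤ c) {p : ℝ≥0∞} (hp : 1 ≤ p) :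
    eLpNorm (fderiv ℝ (fun x => cutoff n x * u x)) p μ ≤
      eLpNorm (fderiv ℝ u) p μ + c * eLpNorm u p μ := by
  have hpt : ∀ x, ‖fderiv ℝ (fun x => cutoff n x * u x) x‖ ≤ ‖fderiv ℝ u x‖ + c * ‖u x‖ := by
    intro x
    rw [fderiv_fun_mul ((contDiff_cutoff n).differentiable one_ne_zero x)
      (hu.differentiable one_ne_zero x)]
    refine (norm_add_le _ _).trans (add_le_add ?_ ?_)
    · rw [norm_smul, Real.norm_of_nonneg (cutoff_nonneg n x)]
      exact mul_le_of_le_one_left (norm_nonneg _) (cutoff_le_one n x)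
    · rw [norm_smul, mul_comm]
      exact mul_le_mul_of_nonneg_right (hc x) (norm_nonneg _)
  calc eLpNorm (fderiv ℝ (fun x => cutoff n x * u x)) p μ
      ≤ eLpNorm (fun x => ‖fderiv ℝ u x‖ + c * ‖u x‖) p μ := eLpNorm_mono_real hpt
    _ ≤ eLpNorm (fun x => ‖fderiv ℝ u x‖) p μ + eLpNorm (fun x => (c : ℝ) * ‖u x‖) p μ :=
        eLpNorm_add_le (hu.continuous_fderiv one_ne_zero).norm.aestronglyMeasurable
          (continuous_const.mul hu.continuous.norm).aestronglyMeasurable hp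
    _ = eLpNorm (fderiv ℝ u) p μ + c * eLpNorm u p μ := by
        rw [show (fun x => (c : ℝ) * ‖u x‖) = (c : ℝ) • fun x => ‖u x‖ from rfl,
          eLpNorm_const_smul, eLpNorm_norm, eLpNorm_norm, Real.enorm_eq_ofReal c.coe_nonneg,
          ENNReal.ofReal_coe_nnreal]

end Cutoff

theorem eLpNorm_le_of_tendsto_of_le {α F : Type*} [MeasurableSpace α] [NormedAddCommGroup F]
    {μ : Measure α} {p : ℝ≥0∞} {f : ℕ → α → F} {g : α → F} {b : ℕ → ℝ≥0∞} {B : ℝ≥0∞}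
    (hf : ∀ n, AEStronglyMeasurable (f n) μ) (hfg : ∀ᵐ x ∂μ, Tendsto (f · x) atTop (𝓝 (g x)))
    (hfb : ∀ᶠ n in atTop, eLpNorm (f n) p μ ≤ b n) (hb : Tendsto b atTop (𝓝 B)) :
    eLpNorm g p μ ≤ B :=
  calc eLpNorm g p μ ≤ atTop.liminf fun n => eLpNorm (f n) p μ :=
        Lp.eLpNorm_lim_le_liminf_eLpNorm hf g hfg
    _ ≤ atTop.liminf b := liminf_le_liminf hfb
    _ = B := hb.liminf_eq

section Ladyzhenskaya

variable {E : Type*} [NormedAddCommGroup E] [NormedSpace ℝ E] [MeasurableSpace E] [BorelSpace E]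
  [FiniteDimensional ℝ E] (μ : Measure E) [μ.IsAddHaarMeasure]

theorem eLpNorm_four_le_of_eLpNorm_two_ne_top (hE : finrank ℝ E = 2) {u : E → ℝ}
    (hu : ContDiff ℝ 1 u) (hu2 : eLpNorm u 2 μ ≠ ∞) :
    eLpNorm u 4 μ ≤ ladyzhenskayaConst μ * eLpNorm u 2 μ ^ ((1 : ℝ) / 2) *
      eLpNorm (fderiv ℝ u) 2 μ ^ ((1 : ℝ) / 2) := by
  set X := eLpNorm u 2 μ
  set Y := eLpNorm (fderiv ℝ u) 2 μ
  obtain ⟨M, hM⟩ := exists_norm_fderiv_cutoff_le (E := E)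
  set b : ℕ → ℝ≥0∞ := fun n =>
    ladyzhenskayaConst μ * X ^ ((1 : ℝ) / 2) * (Y + ((M / n : ℝ≥0) : ℝ≥0∞) * X) ^ ((1 : ℝ) / 2)
  have hbound : ∀ n, n ≠ 0 → eLpNorm (fun x => cutoff n x * u x) 4 μ ≤ b n := by
    intro n hn
    simp only [b]
    refine (eLpNorm_four_le_of_hasCompactSupport μ hE ((contDiff_cutoff n).mul hu)
      (hasCompactSupport_cutoff hn).mul_right).trans ?_
    gcongr
    · exact eLpNorm_cutoff_mul_le n u 2
    · exact eLpNorm_fderiv_cutoff_mul_le hu (fun x => by simpa using hM n x) one_le_two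
  have hb : Tendsto b atTop (𝓝 (ladyzhenskayaConst μ * X ^ ((1 : ℝ) / 2) * Y ^ ((1 : ℝ) / 2))) := by
    have hM0 : Tendsto (fun n : ℕ => ((M / n : ℝ≥0) : ℝ≥0∞)) atTop (𝓝 0) := by
      simpa using ENNReal.tendsto_coe.2 (tendsto_const_div_atTop_nhds_zero_nat M)
    have hY : Tendsto (fun n : ℕ => Y + ((M / n : ℝ≥0) : ℝ≥0∞) * X) atTop (𝓝 Y) := by
      simpa using tendsto_const_nhds.add (ENNReal.Tendsto.mul_const hM0 (Or.inr hu2))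
    exact ENNReal.Tendsto.const_mul
      ((ENNReal.continuous_rpow_const.tendsto Y).comp hY)
      (Or.inr (by finiteness))
  exact eLpNorm_le_of_tendsto_of_le
    (fun n => ((contDiff_cutoff (k := 0) n).continuous.mul hu.continuous).aestronglyMeasurable)
    (ae_of_all _ (tendsto_cutoff_mul u)) (eventually_ne_atTop 0 |>.mono hbound) hb

end Ladyzhenskaya

/-- Ladyzhenskaya inequality on `ℝ²`:
`‖u‖_{L⁴} ≲ ‖u‖_{L²}^{1/2} ‖∂u‖_{L²}^{1/2}` for Schwartz `u`. -/
theorem ladyzhenskaya :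
    ∃ C : ℝ, 0 < C ∧ ∀ u : SchwartzMap (EuclideanSpace ℝ (Fin 2)) ℝ,
      (eLpNorm (⇑u) 4 volume).toReal ≤
        C * (eLpNorm (⇑u) 2 volume).toReal ^ ((1 : ℝ) / 2) *
          (eLpNorm (fun x => ‖fderiv ℝ (⇑u) x‖) 2 volume).toReal ^ ((1 : ℝ) / 2) := by
  refine ⟨ladyzhenskayaConst (volume : Measure (EuclideanSpace ℝ (Fin 2))) + 1, by positivity,
    fun u => ?_⟩
  have hX : eLpNorm u 2 volume ≠ ∞ := (u.memLp 2 volume).eLpNorm_ne_top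
  have hY : eLpNorm (fderiv ℝ u) 2 volume ≠ ∞ :=
    ((SchwartzMap.fderivCLM ℝ (EuclideanSpace ℝ (Fin 2)) ℝ u).memLp 2 volume).eLpNorm_ne_top
  have h := eLpNorm_four_le_of_eLpNorm_two_ne_top volume finrank_euclideanSpace_fin (u.smooth 1) hX
  rw [eLpNorm_norm]
  calc (eLpNorm u 4 volume).toReal
      ≤ (ladyzhenskayaConst volume * eLpNorm u 2 volume ^ ((1 : ℝ) / 2) *
          eLpNorm (fderiv ℝ u) 2 volume ^ ((1 : ℝ) / 2)).toReal :=
        ENNReal.toReal_mono (by finiteness) h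
    _ = ladyzhenskayaConst volume * (eLpNorm u 2 volume).toReal ^ ((1 : ℝ) / 2) *
          (eLpNorm (fderiv ℝ u) 2 volume).toReal ^ ((1 : ℝ) / 2) := by
        rw [ENNReal.toReal_mul, ENNReal.toReal_mul, ENNReal.toReal_rpow, ENNReal.toReal_rpow,
          ENNReal.coe_toReal]
    _ ≤ _ := by gcongr; linarith
end

section
/- For all Schwartz functions u: R^2 → R, one has ‖u‖_{L^2(R^2)} ≲ ‖u‖_{L^1(R^2)}^{1/2} ‖∂_x^2 u‖_{L^1(R^2)}^{1/2}. -/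
/-!
Integrating `∂₁∂₀u` over the quadrant `{x + s • e₀ + t • e₁ : s, t ≤ 0}` recovers `u x` (the
fundamental theorem of calculus along two orthogonal lines), so
`‖u‖_∞ ≤ ‖∂₁∂₀u‖_{L¹} ≤ ‖D²u‖_{L¹}`. The inequality then follows from
`‖u‖₂² = ∫ |u|·|u| ≤ ‖u‖₁ ‖u‖_∞`.
-/

open MeasureTheory Set
open scoped ENNReal NNReal LineDeriv

lemma eLpNorm_two_sq_le_eLpNorm_one_mul_eLpNorm_top {α G : Type*} [MeasurableSpace α]
    {μ : Measure α} [NormedAddCommGroup G] {f : α → G} (hf : AEStronglyMeasurable f μ) :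
    eLpNorm f 2 μ ^ 2 ≤ eLpNorm f 1 μ * eLpNorm f ∞ μ := by
  have hsq := eLpNorm_norm_rpow (μ := μ) (p := 1) f two_pos
  simp_rw [Real.rpow_two, sq, one_mul, ENNReal.ofReal_ofNat, ENNReal.rpow_two] at hsq
  calc eLpNorm f 2 μ ^ 2 = eLpNorm (fun x => ‖f x‖ * ‖f x‖) 1 μ := hsq.symm
    _ ≤ (1 : ℝ≥0) * eLpNorm (fun x => ‖f x‖) 1 μ * eLpNorm (fun x => ‖f x‖) ∞ μ :=
        eLpNorm_le_eLpNorm_mul_eLpNorm_top 1 hf.norm _ (· * ·) 1 (ae_of_all _ fun x => by simp)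
    _ = eLpNorm f 1 μ * eLpNorm f ∞ μ := by
        rw [ENNReal.coe_one, one_mul, eLpNorm_norm, eLpNorm_norm]

lemma ENNReal.toReal_le_rpow_half_mul_rpow_half {a b c : ℝ≥0∞} (h : a ^ 2 ≤ b * c)
    (hb : b ≠ ∞) (hc : c ≠ ∞) : a.toReal ≤ b.toReal ^ (1 / 2 : ℝ) * c.toReal ^ (1 / 2 : ℝ) := by
  have hreal := ENNReal.toReal_mono (ENNReal.mul_ne_top hb hc) h
  rw [ENNReal.toReal_pow, ENNReal.toReal_mul] at hreal
  rw [← Real.mul_rpow ENNReal.toReal_nonneg ENNReal.toReal_nonneg, ← Real.sqrt_eq_rpow]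
  exact Real.le_sqrt_of_sq_le hreal

lemma antilipschitzWith_add_smul {E : Type*} [NormedAddCommGroup E] [NormedSpace ℝ E] (x : E)
    {v : E} (hv : v ≠ 0) : AntilipschitzWith ‖v‖₊⁻¹ fun t : ℝ => x + t • v := by
  refine AntilipschitzWith.of_le_mul_dist fun s t => ?_
  rw [dist_add_left, dist_eq_norm (s • v), ← sub_smul, norm_smul, ← dist_eq_norm, NNReal.coe_inv,
    coe_nnnorm, mul_comm (dist s t), inv_mul_cancel_left₀ (norm_ne_zero_iff.mpr hv)]

section Plane

variable {E : Type*} [NormedAddCommGroup E] [InnerProductSpace ℝ E] [FiniteDimensional ℝ E]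
  [MeasurableSpace E] [BorelSpace E]

lemma OrthonormalBasis.measurePreserving_add_smul_add_smul (b : OrthonormalBasis (Fin 2) ℝ E)
    (x : E) : MeasurePreserving (fun p : ℝ × ℝ => x + p.1 • b 0 + p.2 • b 1) := by
  have hcoord : MeasurePreserving
      (fun p : ℝ × ℝ => b.repr.symm (WithLp.toLp 2 (MeasurableEquiv.finTwoArrow.symm p))) :=
    b.measurePreserving_repr_symm.comp
      ((PiLp.volume_preserving_toLp (Fin 2)).comp (volume_preserving_finTwoArrow ℝ).symm)
  have hfun : (fun p : ℝ × ℝ => x + p.1 • b 0 + p.2 • b 1) =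
      (x + ·) ∘ fun p => b.repr.symm (WithLp.toLp 2 (MeasurableEquiv.finTwoArrow.symm p)) := by
    funext p
    rw [Function.comp_apply, ← b.sum_repr_symm, Fin.sum_univ_two, add_assoc]
    rfl
  rw [hfun]
  exact (measurePreserving_add_left volume x).comp hcoord

lemma OrthonormalBasis.integrable_comp_add_smul_add_smul (b : OrthonormalBasis (Fin 2) ℝ E)
    (x : E) {g : E → ℝ} (hg : Integrable g) :
    Integrable (fun p : ℝ × ℝ => g (x + p.1 • b 0 + p.2 • b 1)) (volume.prod volume) := by
  rw [← Measure.volume_eq_prod]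
  exact (b.measurePreserving_add_smul_add_smul x).integrable_comp_of_integrable hg

lemma OrthonormalBasis.integral_integral_add_smul_add_smul (b : OrthonormalBasis (Fin 2) ℝ E)
    (x : E) {g : E → ℝ} (hg : Integrable g) :
    ∫ s : ℝ, ∫ t : ℝ, g (x + s • b 0 + t • b 1) = ∫ y, g y := by
  have hΦ := b.measurePreserving_add_smul_add_smul x
  rw [← integral_prod _ (b.integrable_comp_add_smul_add_smul x hg), ← Measure.volume_eq_prod,
    ← hΦ.map_eq, integral_map hΦ.measurable.aemeasurable (hΦ.map_eq ▸ hg.aestronglyMeasurable)]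

end Plane

namespace SchwartzMap

variable {E F : Type*} [NormedAddCommGroup E] [NormedSpace ℝ E]
  [NormedAddCommGroup F] [NormedSpace ℝ F]

noncomputable def restrictLine (x : E) {v : E} (hv : v ≠ 0) : 𝓢(E, F) →L[ℝ] 𝓢(ℝ, F) :=
  compCLMOfAntilipschitz ℝ (g := fun t : ℝ => x + t • v) (by fun_prop)
    (antilipschitzWith_add_smul x hv)

@[simp] lemma restrictLine_apply (x : E) {v : E} (hv : v ≠ 0) (f : 𝓢(E, F)) (t : ℝ) :
    restrictLine x hv f t = f (x + t • v) := rfl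

lemma deriv_restrictLine (x : E) {v : E} (hv : v ≠ 0) (f : 𝓢(E, F)) (t : ℝ) :
    deriv (restrictLine x hv f) t = ∂_{v} f (x + t • v) := by
  have hline : HasDerivAt (fun s : ℝ => x + s • v) v t := by
    simpa using ((hasDerivAt_id t).smul_const v).const_add x
  exact ((f.hasFDerivAt _).comp_hasDerivAt t hline).deriv

lemma norm_lineDerivOp_lineDerivOp_le (u : 𝓢(E, F)) (v w y : E) :
    ‖∂_{v} (∂_{w} u) y‖ ≤ ‖iteratedFDeriv ℝ 2 u y‖ * (‖v‖ * ‖w‖) := by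
  have hsecond : ∂_{v} (∂_{w} u) y = iteratedFDeriv ℝ 2 u y ![v, w] := by
    rw [← iteratedLineDerivOp_eq_iteratedFDeriv, LineDeriv.iteratedLineDerivOp_succ_left,
      LineDeriv.iteratedLineDerivOp_one]
    rfl
  rw [hsecond]
  simpa [Fin.prod_univ_two] using (iteratedFDeriv ℝ 2 u y).le_opNorm ![v, w]

lemma eLpNorm_iteratedFDeriv_ne_top [MeasurableSpace E] [BorelSpace E] [SecondCountableTopology E]
    (μ : Measure E) [μ.HasTemperateGrowth] (u : 𝓢(E, F)) (n : ℕ) :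
    eLpNorm (iteratedFDeriv ℝ n u) 1 μ ≠ ∞ := by
  have hint : Integrable (fun x => ‖iteratedFDeriv ℝ n u x‖) μ := by
    simpa using u.integrable_pow_mul_iteratedFDeriv μ 0 n
  rw [← eLpNorm_norm]
  exact (memLp_one_iff_integrable.2 hint).eLpNorm_ne_top

variable [CompleteSpace F]

lemma integral_Iic_deriv (g : 𝓢(ℝ, F)) (b : ℝ) : ∫ t in Iic b, deriv g t = g b := by
  rw [integral_Iic_of_hasDerivAt_of_tendsto' (fun t _ => g.hasDerivAt t)
    (derivCLM ℝ F g).integrable.integrableOn (g.tendsto_cocompact.mono_left atBot_le_cocompact),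
    sub_zero]

lemma eq_integral_Iic_lineDerivOp (f : 𝓢(E, F)) (x : E) {v : E} (hv : v ≠ 0) :
    f x = ∫ t in Iic (0 : ℝ), ∂_{v} f (x + t • v) := by
  simp_rw [← deriv_restrictLine x hv, integral_Iic_deriv, restrictLine_apply, zero_smul, add_zero]

lemma norm_le_integral_norm_lineDerivOp (f : 𝓢(E, F)) (x : E) {v : E} (hv : v ≠ 0) :
    ‖f x‖ ≤ ∫ t : ℝ, ‖∂_{v} f (x + t • v)‖ := by
  rw [eq_integral_Iic_lineDerivOp f x hv]
  exact (norm_integral_le_integral_norm _).trans <| setIntegral_le_integral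
    (restrictLine x hv (∂_{v} f)).integrable.norm (ae_of_all _ fun _ => norm_nonneg _)

end SchwartzMap

namespace SchwartzMap

variable {E F : Type*} [NormedAddCommGroup E] [InnerProductSpace ℝ E] [FiniteDimensional ℝ E]
  [MeasurableSpace E] [BorelSpace E] [NormedAddCommGroup F] [NormedSpace ℝ F] [CompleteSpace F]

lemma norm_le_integral_norm_lineDerivOp_lineDerivOp (b : OrthonormalBasis (Fin 2) ℝ E)
    (u : 𝓢(E, F)) (x : E) : ‖u x‖ ≤ ∫ y, ‖∂_{b 1} (∂_{b 0} u) y‖ := by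
  have hint : Integrable fun y => ‖∂_{b 1} (∂_{b 0} u) y‖ := (∂_{b 1} (∂_{b 0} u)).integrable.norm
  calc ‖u x‖ ≤ ∫ s : ℝ, ‖∂_{b 0} u (x + s • b 0)‖ :=
        norm_le_integral_norm_lineDerivOp u x (b.orthonormal.ne_zero 0)
    _ ≤ ∫ s : ℝ, ∫ t : ℝ, ‖∂_{b 1} (∂_{b 0} u) (x + s • b 0 + t • b 1)‖ :=
        integral_mono (restrictLine x (b.orthonormal.ne_zero 0) (∂_{b 0} u)).integrable.norm
          (b.integrable_comp_add_smul_add_smul x hint).integral_prod_left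
          fun s => norm_le_integral_norm_lineDerivOp _ _ (b.orthonormal.ne_zero 1)
    _ = ∫ y, ‖∂_{b 1} (∂_{b 0} u) y‖ := b.integral_integral_add_smul_add_smul x hint

lemma eLpNorm_top_le_eLpNorm_iteratedFDeriv_two (hE : Module.finrank ℝ E = 2) (u : 𝓢(E, F)) :
    eLpNorm u ∞ volume ≤ eLpNorm (iteratedFDeriv ℝ 2 u) 1 volume := by
  set b := (stdOrthonormalBasis ℝ E).reindex (finCongr hE)
  set w := ∂_{b 1} (∂_{b 0} u)
  calc eLpNorm u ∞ volume ≤ ENNReal.ofReal (∫ y, ‖w y‖) := by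
        rw [eLpNorm_exponent_top]
        exact eLpNormEssSup_le_of_ae_bound
          (ae_of_all _ (norm_le_integral_norm_lineDerivOp_lineDerivOp b u))
    _ = eLpNorm w 1 volume := by
        rw [ofReal_integral_norm_eq_lintegral_enorm w.integrable, eLpNorm_one_eq_lintegral_enorm]
    _ ≤ eLpNorm (iteratedFDeriv ℝ 2 u) 1 volume :=
        eLpNorm_mono fun y => (norm_lineDerivOp_lineDerivOp_le u _ _ y).trans_eq
          (by simp [b.orthonormal.1])

end SchwartzMap

/-- Gagliardo–Nirenberg inequality on `ℝ²` with `L¹`-based norms: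
`‖u‖_{L²} ≲ ‖u‖_{L¹}^{1/2} ‖∂²u‖_{L¹}^{1/2}` for Schwartz `u`. -/
theorem gagliardo_nirenberg_L1 :
    ∃ C : ℝ, 0 < C ∧ ∀ u : SchwartzMap (EuclideanSpace ℝ (Fin 2)) ℝ,
      (eLpNorm (⇑u) 2 volume).toReal ≤
        C * (eLpNorm (⇑u) 1 volume).toReal ^ ((1 : ℝ) / 2) *
          (eLpNorm (fun x => ‖iteratedFDeriv ℝ 2 (⇑u) x‖) 1 volume).toReal ^ ((1 : ℝ) / 2) := by
  refine ⟨1, one_pos, fun u => ?_⟩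
  rw [one_mul, eLpNorm_norm]
  refine ENNReal.toReal_le_rpow_half_mul_rpow_half ?_ (u.memLp 1 volume).eLpNorm_ne_top
    (u.eLpNorm_iteratedFDeriv_ne_top volume 2)
  calc eLpNorm u 2 volume ^ 2 ≤ eLpNorm u 1 volume * eLpNorm u ∞ volume :=
        eLpNorm_two_sq_le_eLpNorm_one_mul_eLpNorm_top u.continuous.aestronglyMeasurable
    _ ≤ eLpNorm u 1 volume * eLpNorm (iteratedFDeriv ℝ 2 u) 1 volume := by
        gcongr
        exact u.eLpNorm_top_le_eLpNorm_iteratedFDeriv_two finrank_euclideanSpace_fin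
end
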